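/- arXiv:2402.15142 — 4 statements merged into one kernel-verified Lean document; each statement's English description precedes it below -/
import Mathlib

section
/- For every real z < 0, the 2×2 real matrix Δ(z) with entries Δ₁₁ = z + 1/φ₁(z) − z/2, Δ₁₂ = 0, Δ₂₁ = z + 1/φ₁(z), Δ₂₂ = z + 1/φ₂(z) − z/2, where φ₁(z) = (e^z − 1)/z and φ₂(z) = (e^z − z − 1)/z², is positive definite: xᵀΔ(z)x > 0 for every nonzero x ∈ ℝ². (This is the positive-definiteness condition establishing unconditional energy decay of the second-order ETDRK scheme.) -/
open Matrix Real

/-- For every `z < 0`, the 2×2 matrix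
`Δ(z) = !![z + 1/φ₁(z) - z/2, 0; z + 1/φ₁(z), z + 1/φ₂(z) - z/2]`, where `φ₁(z) = (e^z - 1)/z`
and `φ₂(z) = (e^z - z - 1)/z²`, is positive definite: `xᵀΔ(z)x > 0` for every nonzero `x ∈ ℝ²`.
This establishes the unconditional energy decay of the second-order ETDRK scheme. -/
theorem stmt8 : ∀ z : ℝ, z < 0 →
    ∀ x : Fin 2 → ℝ, x ≠ 0 →
      0 < x ⬝ᵥ ((!![z + 1 / ((exp z - 1) / z) - z / 2, 0;
                    z + 1 / ((exp z - 1) / z),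
                    z + 1 / ((exp z - z - 1) / z ^ 2) - z / 2] : Matrix (Fin 2) (Fin 2) ℝ) *ᵥ x) := by
  intro z hz x hx
  simp only [dotProduct, Matrix.mulVec, Fin.sum_univ_two, one_div_div,
    Matrix.cons_val', Matrix.cons_val_zero, Matrix.cons_val_one, Matrix.head_cons,
    Matrix.empty_val', Matrix.cons_val_fin_one, Matrix.head_fin_const, dotProduct,
    Matrix.cons_dotProduct, Matrix.dotProduct_of_isEmpty, add_zero, Matrix.of_apply, zero_mul]
  have hu0 : 0 < exp z := exp_pos z
  have hu1 : exp z < 1 := exp_lt_one_iff.mpr hz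
  set u := exp z with hu
  have h2 : z + 1 < u := add_one_lt_exp (ne_of_lt hz)
  have h3 : (1 - z) * u < 1 := by
    have h := add_one_lt_exp (show -z ≠ 0 by linarith)
    rw [Real.exp_neg, ← hu] at h
    calc (1 - z) * u < u⁻¹ * u := by nlinarith
    _ = 1 := by field_simp
  have h4 : (1 - 2*z) * u^2 < 1 := by
    have h := add_one_lt_exp (show -(2*z) ≠ 0 by linarith)
    rw [Real.exp_neg] at h
    have h2z : exp (2*z) = u^2 := by
      rw [show (2:ℝ)*z = z + z by ring, Real.exp_add, ← hu]; ring
    rw [h2z] at h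
    have : 0 < u^2 := by positivity
    calc (1 - 2*z) * u^2 < (u^2)⁻¹ * u^2 := by nlinarith
    _ = 1 := by field_simp
  have hF : 0 < 2*z*u^2 - u - z + 1 := by nlinarith
  have hd1 : u - 1 < 0 := by linarith
  have hd2 : 0 < u - z - 1 := by linarith
  have hne1 : u - 1 ≠ 0 := by linarith
  have hne2 : u - z - 1 ≠ 0 := by linarith
  set a := x 0
  set b := x 1
  have hab : a ≠ 0 ∨ b ≠ 0 := by
    by_contra h
    push_neg at h
    apply hx
    funext i; fin_cases i
    · exact h.1
    · exact h.2
  have hQ : a * ((z + z / (u - 1) - z / 2) * a) +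
      b * ((z + z / (u - 1)) * a + (z + z ^ 2 / (u - z - 1) - z / 2) * b)
      = (z * ((u+1)*(u-z-1)*a^2 + 2*u*(u-z-1)*a*b + (u+z-1)*(u-1)*b^2)) /
        (2*(u-1)*(u-z-1)) := by
    field_simp
    ring
  rw [hQ]
  apply div_pos_of_neg_of_neg
  · have hbr : 0 < (u+1)*(u-z-1)*a^2 + 2*u*(u-z-1)*a*b + (u+z-1)*(u-1)*b^2 := by
      have hA : 0 < (u+1)*(u-z-1) := by nlinarith
      rcases eq_or_ne b 0 with hb | hb
      · have ha : a ≠ 0 := by tauto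
        have ha2 : 0 < a^2 := by positivity
        rw [hb]
        nlinarith
      · have hb2 : 0 < b^2 := by positivity
        nlinarith [sq_nonneg ((u+1)*(u-z-1)*a + u*(u-z-1)*b),
          mul_pos (mul_pos hd2 hF) hb2, hA]
    nlinarith
  · nlinarith
end

section
/- For every real z < −3: |−9·e^{4z/3} + 18·e^{2z/3} − 6z·e^{2z/3} − 18z·e^{5z/3} + 18z·e^{7z/3} − 9z²·e^{2z} − 9z²·e^{4z/3} + 6z²·e^{5z/3}| / 9 < 2.03. -/
/-!
Writing `x = -z ≥ 3`, every term of the expression is `± xⁿ e^{-kx/3}` with `n ≤ 2 ≤ k`. Since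
`xⁿ e^{-cx}` is decreasing for `x ≥ n / c`, each term is bounded by its value `3ⁿ e^{-k}` at
`x = 3`; with `e^{-2} < 0.14` and `e^{-4} < 0.02` the positive terms sum to less than `7.2` and
the negative ones to more than `-4.5`, well inside `±9 · 2.03`.
-/

open Real

theorem pow_mul_exp_neg_le {a t c : ℝ} {n : ℕ} (ha : 0 < a) (hat : a ≤ t) (hn : n ≤ c * a) :
    t ^ n * exp (-(c * t)) ≤ a ^ n * exp (-(c * a)) := by
  have hta : 0 ≤ t / a := div_nonneg (ha.le.trans hat) ha.le
  have hexponent : n * (t / a - 1) ≤ c * (t - a) := by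
    rw [div_sub_one ha.ne', mul_div_assoc', div_le_iff₀ ha]
    nlinarith [mul_le_mul_of_nonneg_right hn (sub_nonneg.2 hat)]
  have hratio : (t / a) ^ n ≤ exp (c * (t - a)) :=
    calc (t / a) ^ n ≤ exp (t / a - 1) ^ n := by
          gcongr; linarith [add_one_le_exp (t / a - 1)]
      _ = exp (n * (t / a - 1)) := (exp_nat_mul _ n).symm
      _ ≤ exp (c * (t - a)) := exp_le_exp.2 hexponent
  calc t ^ n * exp (-(c * t)) = a ^ n * (t / a) ^ n * exp (-(c * t)) := by
        rw [div_pow, mul_div_cancel₀ _ (pow_pos ha n).ne']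
    _ ≤ a ^ n * exp (c * (t - a)) * exp (-(c * t)) := by gcongr
    _ = a ^ n * exp (-(c * a)) := by rw [mul_assoc, ← exp_add]; ring_nf

theorem neg_pow_mul_exp_le {z k m : ℝ} {n : ℕ} (hz : z ≤ -3) (hn : n ≤ m) (hmk : m ≤ k) :
    (-z) ^ n * exp (k * z / 3) ≤ 3 ^ n * exp (-m) :=
  calc (-z) ^ n * exp (k * z / 3) = (-z) ^ n * exp (-(k / 3 * -z)) := by ring_nf
    _ ≤ 3 ^ n * exp (-(k / 3 * 3)) :=
        pow_mul_exp_neg_le (by norm_num) (by linarith) (by linarith)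
    _ ≤ 3 ^ n * exp (-m) := by gcongr; linarith

theorem exp_neg_two_lt : exp (-2) < 0.14 := by
  have h : exp (-2) = exp (-1) ^ 2 := by rw [← exp_nat_mul]; norm_num
  rw [h]
  nlinarith [exp_neg_one_lt_d9, exp_pos (-1)]

theorem exp_neg_four_lt : exp (-4) < 0.02 := by
  have h : exp (-4) = exp (-2) ^ 2 := by rw [← exp_nat_mul]; norm_num
  rw [h]
  nlinarith [exp_neg_two_lt, exp_pos (-2)]

/-- For every `z < -3`, the exponential part `R₂(z)` of `z⁴·Det(Δ'_{2×2})`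
for the third-order ETDRK scheme (3.14) satisfies `|R₂(z)| < 2.03`. -/
theorem stmt12 : ∀ z : ℝ, z < -3 →
    |(-9 * exp (4 * z / 3) + 18 * exp (2 * z / 3) - 6 * z * exp (2 * z / 3)
        - 18 * z * exp (5 * z / 3) + 18 * z * exp (7 * z / 3) - 9 * z ^ 2 * exp (2 * z)
        - 9 * z ^ 2 * exp (4 * z / 3) + 6 * z ^ 2 * exp (5 * z / 3))| / 9 < 2.03 := by
  intro z hz
  have term_bounds (n : ℕ) (k m : ℝ) (hn : n ≤ m) (hmk : m ≤ k) :
      0 ≤ (-z) ^ n * exp (k * z / 3) ∧ (-z) ^ n * exp (k * z / 3) ≤ 3 ^ n * exp (-m) :=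
    ⟨mul_nonneg (pow_nonneg (by linarith) n) (exp_pos _).le, neg_pow_mul_exp_le hz.le hn hmk⟩
  obtain ⟨l₁, u₁⟩ := term_bounds 0 4 4 (by norm_num) (by norm_num)
  obtain ⟨l₂, u₂⟩ := term_bounds 0 2 2 (by norm_num) (by norm_num)
  obtain ⟨l₃, u₃⟩ := term_bounds 1 2 2 (by norm_num) (by norm_num)
  obtain ⟨l₄, u₄⟩ := term_bounds 1 5 4 (by norm_num) (by norm_num)
  obtain ⟨l₅, u₅⟩ := term_bounds 1 7 4 (by norm_num) (by norm_num)
  obtain ⟨l₆, u₆⟩ := term_bounds 2 6 4 (by norm_num) (by norm_num)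
  obtain ⟨l₇, u₇⟩ := term_bounds 2 4 4 (by norm_num) (by norm_num)
  obtain ⟨l₈, u₈⟩ := term_bounds 2 5 4 (by norm_num) (by norm_num)
  rw [show 6 * z / 3 = 2 * z by ring] at l₆ u₆
  have := exp_neg_two_lt
  have := exp_neg_four_lt
  rw [div_lt_iff₀ (by norm_num), abs_lt]
  constructor <;> linarith
end

section
/- (Unconditional energy decay of the first-order ETD scheme, finite-dimensional version.) Let n ≥ 1, β > 0, τ > 0. Let G and 𝓛 be commuting n×n real symmetric matrices with G negative definite, and suppose L := β·I + 𝓛 is positive definite. Let F : ℝⁿ → ℝ be differentiable with gradient f Lipschitz with constant β, and set g(u) := β·u − f(u) and E(u) := (1/2)⟨u, 𝓛u⟩ + F(u). Given u_n ∈ ℝⁿ, define u_{n+1} := u_n + τ·φ₁(τGL)·(G·L·u_n − G·g(u_n)), where φ₁(z) = (e^z − 1)/z and φ₁(τGL) denotes applying φ₁ to each eigenvalue in an orthonormal spectral decomposition of the symmetric matrix τGL. Then E(u_{n+1}) ≤ E(u_n) for every time step τ > 0. -/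
open Matrix Real
open scoped RealInnerProductSpace

/-- `φ₁(z) = (e^z - 1)/z`. -/
noncomputable def phi1 (z : ℝ) : ℝ := (exp z - 1) / z

/-- A matrix acting on Euclidean space by matrix-vector multiplication. -/
noncomputable def mulVecE {n : ℕ} (M : Matrix (Fin n) (Fin n) ℝ)
    (x : EuclideanSpace ℝ (Fin n)) : EuclideanSpace ℝ (Fin n) := WithLp.toLp 2 (M.mulVec x)

namespace Stmt15Aux

/-- Every function is continuous on the (finite) real spectrum of a matrix. -/
lemma contOnSpec {n : ℕ} (f : ℝ → ℝ) (A : Matrix (Fin n) (Fin n) ℝ) :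
    ContinuousOn f (spectrum ℝ A) := by
  have h : Finite (spectrum ℝ A) := Matrix.finite_real_spectrum
  have : DiscreteTopology (spectrum ℝ A) := Finite.instDiscreteTopology
  rw [continuousOn_iff_continuous_restrict]
  exact continuous_of_discreteTopology

lemma transpose_eq_of_sa {n : ℕ} {X : Matrix (Fin n) (Fin n) ℝ} (h : IsSelfAdjoint X) :
    Xᵀ = X := by
  have h' : Xᴴ = X := h
  ext i j
  have h2 := congrFun (congrFun h'.symm j) i
  simp only [Matrix.conjTranspose_apply, star_trivial] at h2
  rw [Matrix.transpose_apply]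
  exact h2

lemma herm_of_transpose {n : ℕ} {X : Matrix (Fin n) (Fin n) ℝ} (h : Xᵀ = X) :
    X.IsHermitian := by
  have : Xᴴ = Xᵀ := by ext i j; simp [Matrix.conjTranspose_apply]
  exact this.trans h

lemma dp_symm {n : ℕ} {M : Matrix (Fin n) (Fin n) ℝ} (hM : Mᵀ = M) (x y : Fin n → ℝ) :
    x ⬝ᵥ (M *ᵥ y) = (M *ᵥ x) ⬝ᵥ y := by
  rw [dotProduct_mulVec, ← hM, vecMul_transpose, hM]

lemma diag_comm {n : ℕ} {μ : Fin n → ℝ} (f : ℝ → ℝ) {C : Matrix (Fin n) (Fin n) ℝ}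
    (h : diagonal μ * C = C * diagonal μ) :
    diagonal (f ∘ μ) * C = C * diagonal (f ∘ μ) := by
  ext i j
  have h' : μ i * C i j = C i j * μ j := by
    simpa [Matrix.diagonal_mul, Matrix.mul_diagonal] using
      congr_arg (fun M : Matrix (Fin n) (Fin n) ℝ => M i j) h
  simp only [Matrix.diagonal_mul, Matrix.mul_diagonal, Function.comp_apply]
  rcases eq_or_ne (μ i) (μ j) with he | he
  · rw [he, mul_comm]
  · have hC : C i j = 0 := by
      have : (μ i - μ j) * C i j = 0 := by linear_combination h'
      rcases mul_eq_zero.mp this with h0 | h0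
      · exact absurd (by linarith : μ i = μ j) he
      · exact h0
    simp [hC]

/-- Anything commuting with a Hermitian real matrix commutes with its functional calculus. -/
lemma commute_cfc {n : ℕ} {A B : Matrix (Fin n) (Fin n) ℝ} (hA : A.IsHermitian)
    (hAB : A * B = B * A) (f : ℝ → ℝ) : cfc f A * B = B * cfc f A := by
  rw [hA.cfc_eq f]
  set U : Matrix (Fin n) (Fin n) ℝ :=
    (Matrix.IsHermitian.eigenvectorUnitary hA : Matrix (Fin n) (Fin n) ℝ) with hU
  have hUU : star U * U = 1 :=
    Unitary.star_mul_self_of_mem (Matrix.IsHermitian.eigenvectorUnitary hA).2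
  have hUU' : U * star U = 1 :=
    Unitary.mul_star_self_of_mem (Matrix.IsHermitian.eigenvectorUnitary hA).2
  set μ := hA.eigenvalues with hμ
  have hspec : A = U * diagonal μ * star U := by
    simpa [RCLike.ofReal_real_eq_id] using hA.spectral_theorem
  set C : Matrix (Fin n) (Fin n) ℝ := star U * B * U with hC
  have hDC : diagonal μ * C = C * diagonal μ := by
    have h1 : star U * A * U = diagonal μ := by
      rw [hspec]
      calc star U * (U * diagonal μ * star U) * U
          = (star U * U) * diagonal μ * (star U * U) := by noncomm_ring
        _ = diagonal μ := by rw [hUU]; simp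
    calc diagonal μ * C = (star U * A * U) * (star U * B * U) := by rw [h1]
      _ = star U * A * (U * star U) * B * U := by noncomm_ring
      _ = star U * (A * B) * U := by rw [hUU']; noncomm_ring
      _ = star U * (B * A) * U := by rw [hAB]
      _ = star U * B * (U * star U) * A * U := by rw [hUU']; noncomm_ring
      _ = (star U * B * U) * (star U * A * U) := by noncomm_ring
      _ = C * diagonal μ := by rw [h1]
  have hfDC := diag_comm f hDC
  have hBdec : B = U * C * star U := by
    rw [hC]
    calc B = (U * star U) * B * (U * star U) := by rw [hUU']; noncomm_ring
      _ = U * (star U * B * U) * star U := by noncomm_ring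
  have hcomp : RCLike.ofReal ∘ f ∘ μ = f ∘ μ := by rw [RCLike.ofReal_real_eq_id]; rfl
  have hcfc : hA.cfc f = U * diagonal (f ∘ μ) * star U := by
    rw [Matrix.IsHermitian.cfc, hcomp]
    rfl
  rw [hcfc]
  calc (U * diagonal (f ∘ μ) * star U) * B
      = (U * diagonal (f ∘ μ) * star U) * (U * C * star U) := by rw [← hBdec]
    _ = U * (diagonal (f ∘ μ) * (star U * U) * C) * star U := by noncomm_ring
    _ = U * (diagonal (f ∘ μ) * C) * star U := by rw [hUU]; noncomm_ring
    _ = U * (C * diagonal (f ∘ μ)) * star U := by rw [hfDC]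
    _ = (U * C * star U) * (U * diagonal (f ∘ μ) * star U) := by
        rw [show U * (C * diagonal (f ∘ μ)) * star U
            = U * (C * ((star U * U) * diagonal (f ∘ μ))) * star U by rw [hUU]; noncomm_ring]
        noncomm_ring
    _ = B * (U * diagonal (f ∘ μ) * star U) := by rw [← hBdec]

/-- Descent lemma: quadratic upper bound for a function with Lipschitz gradient. -/
lemma descent {n : ℕ} (β : ℝ)
    (F : EuclideanSpace ℝ (Fin n) → ℝ) (f : EuclideanSpace ℝ (Fin n) → EuclideanSpace ℝ (Fin n))
    (hgrad : ∀ u, HasGradientAt F (f u) u)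
    (hlip : ∀ u v, ‖f u - f v‖ ≤ β * ‖u - v‖)
    (u d : EuclideanSpace ℝ (Fin n)) :
    F (u + d) ≤ F u + ⟪f u, d⟫ + β / 2 * ‖d‖ ^ 2 := by
  set c : ℝ → EuclideanSpace ℝ (Fin n) := fun t => u + t • d with hc
  have hcder : ∀ t : ℝ, HasDerivAt c d t := by
    intro t
    simpa [hc] using ((hasDerivAt_id t).smul_const d).const_add u
  have hφ : ∀ t : ℝ, HasDerivAt (fun t => F (c t)) ⟪f (c t), d⟫ t := by
    intro t
    have hF : HasFDerivAt F (InnerProductSpace.toDual ℝ _ (f (c t))) (c t) :=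
      (hgrad (c t)).hasFDerivAt
    exact hF.comp_hasDerivAt t (hcder t)
  set θ : ℝ → ℝ := fun t => F u + t * ⟪f u, d⟫ + β / 2 * t ^ 2 * ‖d‖ ^ 2 - F (c t) with hθ
  have hθder : ∀ t : ℝ, HasDerivAt θ (⟪f u, d⟫ + β * t * ‖d‖ ^ 2 - ⟪f (c t), d⟫) t := by
    intro t
    have h1 : HasDerivAt (fun t : ℝ => F u + t * ⟪f u, d⟫ + β / 2 * t ^ 2 * ‖d‖ ^ 2)
        (⟪f u, d⟫ + β * t * ‖d‖ ^ 2) t := by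
      have : HasDerivAt (fun t : ℝ => F u + t * ⟪f u, d⟫ + β / 2 * t ^ 2 * ‖d‖ ^ 2)
          (0 + (1 * ⟪f u, d⟫) + β / 2 * (2 * t) * ‖d‖ ^ 2) t := by
        apply HasDerivAt.add
        · exact (hasDerivAt_const t _).add ((hasDerivAt_id t).mul_const _)
        · have ht2 : HasDerivAt (fun t : ℝ => t ^ 2) (2 * t) t := by
            simpa using hasDerivAt_pow 2 t
          simpa [mul_assoc] using (ht2.const_mul (β / 2)).mul_const (‖d‖ ^ 2)
      convert this using 1
      ring
    exact h1.sub (hφ t)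
  have hmono : MonotoneOn θ (Set.Icc 0 1) := by
    apply monotoneOn_of_deriv_nonneg (convex_Icc 0 1)
    · exact (HasDerivAt.continuousOn (fun t _ => hθder t))
    · intro t _
      exact (hθder t).differentiableAt.differentiableWithinAt
    · intro t ht
      rw [interior_Icc] at ht
      rw [(hθder t).deriv]
      have hip : ⟪f (c t) - f u, d⟫ ≤ β * t * ‖d‖ ^ 2 := by
        calc ⟪f (c t) - f u, d⟫ ≤ ‖f (c t) - f u‖ * ‖d‖ := real_inner_le_norm _ _
          _ ≤ (β * ‖c t - u‖) * ‖d‖ := by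
              have := hlip (c t) u
              nlinarith [norm_nonneg (f (c t) - f u), norm_nonneg d]
          _ = β * t * ‖d‖ ^ 2 := by
              have : ‖c t - u‖ = t * ‖d‖ := by
                simp [hc, norm_smul, abs_of_pos ht.1]
              rw [this]; ring
      have := inner_sub_left (𝕜 := ℝ) (f (c t)) (f u) d
      rw [this] at hip
      linarith
  have h01 := hmono (Set.left_mem_Icc.mpr zero_le_one)
    (Set.right_mem_Icc.mpr zero_le_one) zero_le_one
  have hθ0 : θ 0 = 0 := by simp [hθ, hc]
  have hθ1 : θ 1 = F u + ⟪f u, d⟫ + β / 2 * ‖d‖ ^ 2 - F (u + d) := by simp [hθ, hc]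
  rw [hθ0, hθ1] at h01
  linarith

lemma inner_eq_dp {n : ℕ} (x y : EuclideanSpace ℝ (Fin n)) :
    ⟪x, y⟫ = (x : Fin n → ℝ) ⬝ᵥ (y : Fin n → ℝ) := by
  simp [PiLp.inner_apply, dotProduct, RCLike.inner_apply, mul_comm]

end Stmt15Aux

open Stmt15Aux in
/-- Unconditional energy decay of the first-order ETD scheme
`u_{n+1} = u_n + τ·φ₁(τGL)·(GLu_n - G g(u_n))` (finite-dimensional version): under the
stated assumptions on `G`, `𝓛`, `β`, `f`, the energy `E u = (1/2)⟪u, 𝓛u⟫ + F u`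
satisfies `E u_{n+1} ≤ E u_n` for every `τ > 0`.  Here `φ₁(τGL)` is the Hermitian
functional calculus `cfc φ₁ (τ • (G*L))`, applying `φ₁` to each eigenvalue in an
orthonormal spectral decomposition of the symmetric matrix `τGL`. -/
theorem stmt15 (n : ℕ) (hn : 1 ≤ n) (β τ : ℝ) (hβ : 0 < β) (hτ : 0 < τ)
    (G 𝓛 : Matrix (Fin n) (Fin n) ℝ) (hGsymm : Gᵀ = G) (h𝓛symm : 𝓛ᵀ = 𝓛)
    (hcomm : G * 𝓛 = 𝓛 * G)
    (hGneg : ∀ x : Fin n → ℝ, x ≠ 0 → x ⬝ᵥ (G *ᵥ x) < 0)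
    (L : Matrix (Fin n) (Fin n) ℝ) (hLdef : L = β • (1 : Matrix (Fin n) (Fin n) ℝ) + 𝓛)
    (hLpos : ∀ x : Fin n → ℝ, x ≠ 0 → 0 < x ⬝ᵥ (L *ᵥ x))
    (F : EuclideanSpace ℝ (Fin n) → ℝ) (f : EuclideanSpace ℝ (Fin n) → EuclideanSpace ℝ (Fin n))
    (hgrad : ∀ u, HasGradientAt F (f u) u)
    (hlip : ∀ u v, ‖f u - f v‖ ≤ β * ‖u - v‖)
    (g : EuclideanSpace ℝ (Fin n) → EuclideanSpace ℝ (Fin n))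
    (hg : ∀ u, g u = β • u - f u)
    (E : EuclideanSpace ℝ (Fin n) → ℝ)
    (hE : ∀ u, E u = (1 / 2) * ⟪u, mulVecE 𝓛 u⟫ + F u)
    (un unp1 : EuclideanSpace ℝ (Fin n))
    (hstep : unp1 = un + τ • mulVecE (cfc phi1 (τ • (G * L)))
        (mulVecE G (mulVecE L un) - mulVecE G (g un))) :
    E unp1 ≤ E un := by
  classical
  -- basic commutation and symmetry facts
  have hGL : G * L = L * G := by
    rw [hLdef, mul_add, add_mul, hcomm]
    congr 1
    rw [Matrix.mul_smul, Matrix.smul_mul, mul_one, one_mul]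
  set A : Matrix (Fin n) (Fin n) ℝ := τ • (G * L) with hAdef
  have hLt : Lᵀ = L := by
    rw [hLdef, Matrix.transpose_add, Matrix.transpose_smul, Matrix.transpose_one, h𝓛symm]
  have hAt : Aᵀ = A := by
    rw [hAdef, Matrix.transpose_smul, Matrix.transpose_mul, hLt, hGsymm, hGL]
  have hA : A.IsHermitian := herm_of_transpose hAt
  have hAG : A * G = G * A := by
    rw [hAdef, Matrix.smul_mul, Matrix.mul_smul]
    congr 1
    rw [mul_assoc, ← hGL, ← mul_assoc]
  have hAL : A * L = L * A := by
    rw [hAdef, Matrix.smul_mul, Matrix.mul_smul]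
    congr 1
    rw [hGL, mul_assoc, hGL]
  set P : Matrix (Fin n) (Fin n) ℝ := cfc phi1 A with hP
  set Eexp : Matrix (Fin n) (Fin n) ℝ := cfc (fun z => exp z - 1) A with hEexp
  have hPG : P * G = G * P := commute_cfc hA hAG phi1
  have hPL : P * L = L * P := commute_cfc hA hAL phi1
  have hEL : Eexp * L = L * Eexp := commute_cfc hA hAL _
  have hEt : Eexpᵀ = Eexp := transpose_eq_of_sa (cfc_predicate _ _)
  have hPt : Pᵀ = P := transpose_eq_of_sa (cfc_predicate _ _)
  have hPA : P * A = Eexp := by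
    have hsa : IsSelfAdjoint A := hA
    have h1 := cfc_mul phi1 (fun z => z) A (contOnSpec _ _) (contOnSpec _ _)
    rw [cfc_id' ℝ A hsa] at h1
    rw [hP, hEexp, ← h1]
    apply cfc_congr
    intro z _
    by_cases hz : z = 0
    · simp [phi1, hz]
    · simp only [phi1]
      field_simp
  set M : Matrix (Fin n) (Fin n) ℝ := τ • (P * G) with hM
  have hML : M * L = Eexp := by
    rw [hM, Matrix.smul_mul, mul_assoc, ← Matrix.mul_smul, ← hAdef, hPA]
  have hMt : Mᵀ = M := by
    rw [hM, Matrix.transpose_smul, Matrix.transpose_mul, hGsymm, hPt, ← hPG]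
  -- negativity of the spectrum of A
  have hspec : ∀ z ∈ spectrum ℝ A, z < 0 := by
    rw [hA.spectrum_real_eq_range_eigenvalues]
    rintro z ⟨i, rfl⟩
    set μ := hA.eigenvalues i with hμ
    set v : Fin n → ℝ := ⇑(hA.eigenvectorBasis i) with hv
    have hv0 : v ≠ 0 := by
      have := hA.eigenvectorBasis.orthonormal.ne_zero i
      intro hc
      apply this
      ext j
      exact congrFun hc j
    have heig : A *ᵥ v = μ • v := hA.mulVec_eigenvectorBasis i
    have hLv0 : L *ᵥ v ≠ 0 := by
      intro hc
      have := hLpos v hv0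
      rw [hc] at this
      simp at this
    have key : (L *ᵥ v) ⬝ᵥ (A *ᵥ v) = μ * (v ⬝ᵥ (L *ᵥ v)) := by
      rw [heig, dotProduct_smul, dotProduct_comm]
      rw [smul_eq_mul]
    have key2 : (L *ᵥ v) ⬝ᵥ (A *ᵥ v) = τ * ((L *ᵥ v) ⬝ᵥ (G *ᵥ (L *ᵥ v))) := by
      rw [hAdef, smul_mulVec, dotProduct_smul, ← mulVec_mulVec]
      rfl
    have hneg : (L *ᵥ v) ⬝ᵥ (A *ᵥ v) < 0 := by
      rw [key2]
      exact mul_neg_of_pos_of_neg hτ (hGneg _ hLv0)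
    have hpos : 0 < v ⬝ᵥ (L *ᵥ v) := hLpos v hv0
    nlinarith [key, hneg, hpos]
  -- square root matrix S with Eexp + (1/2)•Eexp² = -(S*S)
  set s : ℝ → ℝ :=
    fun z => Real.sqrt (-((exp z - 1) + (1/2) * ((exp z - 1) * (exp z - 1)))) with hs
  set S : Matrix (Fin n) (Fin n) ℝ := cfc s A with hS
  have hSt : Sᵀ = S := transpose_eq_of_sa (cfc_predicate _ _)
  have hSL : S * L = L * S := commute_cfc hA hAL s
  have hCS : Eexp + (1/2 : ℝ) • (Eexp * Eexp) = -(S * S) := by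
    rw [hS, hEexp]
    rw [← cfc_mul s s A (contOnSpec _ _) (contOnSpec _ _), ← cfc_neg,
      ← cfc_mul _ _ A (contOnSpec _ _) (contOnSpec _ _),
      ← cfc_smul (1/2 : ℝ) _ A (contOnSpec _ _),
      ← cfc_add A _ _ (contOnSpec _ _) (contOnSpec _ _)]
    apply cfc_congr
    intro z hz
    have hzneg : z < 0 := hspec z hz
    have harg : 0 ≤ -((exp z - 1) + (1/2) * ((exp z - 1) * (exp z - 1))) := by
      nlinarith [Real.exp_pos z, Real.exp_lt_one_iff.mpr hzneg]
    have hss : s z * s z = -((exp z - 1) + (1/2) * ((exp z - 1) * (exp z - 1))) :=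
      Real.mul_self_sqrt harg
    simp only [smul_eq_mul]
    rw [hss]
    ring
  -- surjectivity of L
  have hLsurj : ∀ w : Fin n → ℝ, ∃ y, L *ᵥ y = w := by
    have hpd : L.PosDef := Matrix.PosDef.of_dotProduct_mulVec_pos (herm_of_transpose hLt) fun x hx => by simpa using hLpos x hx
    exact fun w => (Matrix.mulVec_surjective_iff_isUnit.mpr hpd.isUnit) w
  -- core inequality
  have core : ∀ w : Fin n → ℝ,
      w ⬝ᵥ (M *ᵥ w) + 1/2 * ((M *ᵥ w) ⬝ᵥ (L *ᵥ (M *ᵥ w))) ≤ 0 := by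
    intro w
    obtain ⟨y, rfl⟩ := hLsurj w
    have e1 : M *ᵥ (L *ᵥ y) = Eexp *ᵥ y := by rw [mulVec_mulVec, hML]
    have t1 : (L *ᵥ y) ⬝ᵥ (M *ᵥ (L *ᵥ y)) = y ⬝ᵥ ((Eexp * L) *ᵥ y) := by
      rw [e1, ← dp_symm hLt y (Eexp *ᵥ y), mulVec_mulVec, ← hEL]
    have t2 : (M *ᵥ (L *ᵥ y)) ⬝ᵥ (L *ᵥ (M *ᵥ (L *ᵥ y)))
        = y ⬝ᵥ ((Eexp * Eexp * L) *ᵥ y) := by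
      rw [e1, mulVec_mulVec, ← dp_symm hEt y ((L * Eexp) *ᵥ y), mulVec_mulVec]
      rw [show Eexp * (L * Eexp) = Eexp * Eexp * L by
        rw [← hEL, ← mul_assoc]]
    rw [t1, t2]
    have hcomb : (Eexp * L) + (1/2 : ℝ) • (Eexp * Eexp * L) = -(S * S) * L := by
      rw [← hCS, add_mul, Matrix.smul_mul]
    have hsum : y ⬝ᵥ ((Eexp * L) *ᵥ y) + 1/2 * (y ⬝ᵥ ((Eexp * Eexp * L) *ᵥ y))
        = y ⬝ᵥ ((-(S * S) * L) *ᵥ y) := by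
      rw [← hcomb, Matrix.add_mulVec, dotProduct_add, smul_mulVec, dotProduct_smul,
        smul_eq_mul]
    rw [hsum]
    have hfin : y ⬝ᵥ ((-(S * S) * L) *ᵥ y) = -((S *ᵥ y) ⬝ᵥ (L *ᵥ (S *ᵥ y))) := by
      have hrw : -(S * S) * L = -(S * (L * S)) := by
        rw [neg_mul, mul_assoc, hSL]
      rw [hrw, Matrix.neg_mulVec, dotProduct_neg]
      congr 1
      rw [← mulVec_mulVec, dp_symm hSt y ((L * S) *ᵥ y), ← mulVec_mulVec]
    rw [hfin]
    rcases eq_or_ne (S *ᵥ y) 0 with hz | hz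
    · simp [hz]
    · have := hLpos _ hz
      linarith
  -- translate the step into vector language
  set u : Fin n → ℝ := (un : Fin n → ℝ) with hu
  set fu : Fin n → ℝ := (f un : Fin n → ℝ) with hfu
  set w : Fin n → ℝ := 𝓛 *ᵥ u + fu with hw
  set gu : Fin n → ℝ := (g un : Fin n → ℝ) with hgu
  have hgueq : gu = β • u - fu := by rw [hgu, hg un]; rfl
  have hstep' : (unp1 : Fin n → ℝ) = u + τ • (P *ᵥ (G *ᵥ (L *ᵥ u) - G *ᵥ gu)) := by
    rw [hstep]; rfl
  have hwd : G *ᵥ (L *ᵥ u) - G *ᵥ gu = G *ᵥ w := by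
    rw [← Matrix.mulVec_sub]
    congr 1
    rw [hgueq, hw, hLdef, Matrix.add_mulVec, Matrix.smul_mulVec, Matrix.one_mulVec]
    abel
  set dv : Fin n → ℝ := M *ᵥ w with hdv
  have hd : (unp1 : Fin n → ℝ) = u + dv := by
    rw [hstep', hwd, hdv, hM, Matrix.smul_mulVec, mulVec_mulVec]
  -- energy identities
  have hEgen : ∀ x : EuclideanSpace ℝ (Fin n),
      E x = 1/2 * ((x : Fin n → ℝ) ⬝ᵥ (𝓛 *ᵥ (x : Fin n → ℝ))) + F x := by
    intro x
    rw [hE x, inner_eq_dp]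
    rfl
  -- F part via the descent lemma
  have hFle : F unp1 ≤ F un + fu ⬝ᵥ dv + β / 2 * (dv ⬝ᵥ dv) := by
    have hunp1E : unp1 = un + (WithLp.toLp 2 dv) := by
      apply WithLp.ofLp_injective 2; exact hd
    rw [hunp1E]
    have hdesc := descent β F f hgrad hlip un (WithLp.toLp 2 dv)
    have hin : ⟪f un, (WithLp.toLp 2 dv)⟫ = fu ⬝ᵥ dv := inner_eq_dp _ _
    have hnorm : ‖(WithLp.toLp 2 dv)‖ ^ 2 = dv ⬝ᵥ dv := by
      rw [← real_inner_self_eq_norm_sq]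
      exact inner_eq_dp _ _
    rw [hin, hnorm] at hdesc
    exact hdesc
  -- quadratic part
  have hquad : (unp1 : Fin n → ℝ) ⬝ᵥ (𝓛 *ᵥ (unp1 : Fin n → ℝ))
      = u ⬝ᵥ (𝓛 *ᵥ u) + 2 * ((𝓛 *ᵥ u) ⬝ᵥ dv) + dv ⬝ᵥ (𝓛 *ᵥ dv) := by
    rw [hd, Matrix.mulVec_add, dotProduct_add, add_dotProduct, add_dotProduct]
    have h1 : u ⬝ᵥ (𝓛 *ᵥ dv) = (𝓛 *ᵥ u) ⬝ᵥ dv := dp_symm h𝓛symm u dv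
    have h2 : dv ⬝ᵥ (𝓛 *ᵥ u) = (𝓛 *ᵥ u) ⬝ᵥ dv := dotProduct_comm _ _
    rw [h1, h2]
    ring
  -- assemble
  have hLd : dv ⬝ᵥ (L *ᵥ dv) = β * (dv ⬝ᵥ dv) + dv ⬝ᵥ (𝓛 *ᵥ dv) := by
    rw [hLdef, Matrix.add_mulVec, dotProduct_add, Matrix.smul_mulVec, Matrix.one_mulVec,
      dotProduct_smul, smul_eq_mul]
  have hwdv : w ⬝ᵥ dv = (𝓛 *ᵥ u) ⬝ᵥ dv + fu ⬝ᵥ dv := by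
    rw [hw, add_dotProduct]
  have hcore := core w
  have hE1 := hEgen unp1
  have hE2 := hEgen un
  rw [hE1, hE2, hquad]
  have : w ⬝ᵥ (M *ᵥ w) = w ⬝ᵥ dv := rfl
  rw [this, hwdv] at hcore
  have hMLdv : (M *ᵥ w) ⬝ᵥ (L *ᵥ (M *ᵥ w)) = dv ⬝ᵥ (L *ᵥ dv) := rfl
  rw [hMLdv, hLd] at hcore
  have hF2 : F unp1 ≤ F un + fu ⬝ᵥ dv + β / 2 * (dv ⬝ᵥ dv) := hFle
  linarith
end

section
/- (Unconditional energy decay of the second-order ETDRK scheme, finite-dimensional version.) Let n ≥ 1, β > 0, τ > 0. Let G and 𝓛 be commuting n×n real symmetric matrices with G negative definite, and suppose L := β·I + 𝓛 is positive definite. Let F : ℝⁿ → ℝ be differentiable with gradient f Lipschitz with constant β, and set g(u) := β·u − f(u) and E(u) := (1/2)⟨u, 𝓛u⟩ + F(u). Define φ₁(z) = (e^z − 1)/z and φ₂(z) = (e^z − z − 1)/z². Given u_n ∈ ℝⁿ, define v := u_n + τ·φ₁(τGL)·(G·L·u_n − G·g(u_n)) and u_{n+1} := u_n + τ·(φ₁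 − φ₂)(τGL)·(G·L·u_n − G·g(u_n)) + τ·φ₂(τGL)·(G·L·u_n − G·g(v)), where for a continuous function h, h(τGL) denotes applying h to each eigenvalue in an orthonormal spectral decomposition of the symmetric matrix τGL. Then E(u_{n+1}) ≤ E(u_n) for every time step τ > 0. -/
open Matrix Real
open scoped RealInnerProductSpace

/-- `φ₂(z) = (e^z - z - 1)/z²`. -/
noncomputable def phi2 (z : ℝ) : ℝ := (exp z - z - 1) / z ^ 2

section aux
open Polynomial

noncomputable def alf (z : ℝ) : ℝ := Real.sqrt ((exp (2*z) - 1)/(2*z))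
noncomputable def gam (z : ℝ) : ℝ := -(exp z * phi2 z) / (2 * alf z)
noncomputable def etaf (z : ℝ) : ℝ :=
  Real.sqrt (phi2 z + z * phi2 z^2/2 - gam z^2)

lemma psi_nonneg {z : ℝ} (hz : z < 0) :
    0 ≤ 2*z*(exp z)^2 - exp z - z + 1 := by
  have hE : 0 < exp z := exp_pos z
  have h1 : 1 - z ≤ exp (-z) := by
    have := add_one_le_exp (-z); linarith
  have h2 : exp z * (1 - z) ≤ 1 := by
    have h3 : exp z * (1 - z) ≤ exp z * exp (-z) :=
      mul_le_mul_of_nonneg_left h1 hE.le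
    rwa [← exp_add, add_neg_cancel, exp_zero] at h3
  nlinarith [sq_nonneg (exp z * (1-z) - 1), sq_nonneg (1 - z - exp z),
    mul_pos hE hE, sq_nonneg (exp z - 1), sq_nonneg z,
    mul_nonneg (mul_nonneg hE.le hE.le) (sq_nonneg z),
    mul_le_mul_of_nonneg_left h2 hE.le]

lemma q1_pos {z : ℝ} (hz : z < 0) : 0 < (exp (2*z) - 1)/(2*z) := by
  apply div_pos_of_neg_of_neg
  · simpa using exp_lt_one_iff.mpr (by linarith : 2*z < 0)
  · linarith

lemma alf_pos {z : ℝ} (hz : z < 0) : 0 < alf z := Real.sqrt_pos.2 (q1_pos hz)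

lemma alf_sq {z : ℝ} (hz : z < 0) :
    alf z ^ 2 = phi1 z + z * phi1 z ^ 2 / 2 := by
  have hz0 : z ≠ 0 := hz.ne
  rw [alf, Real.sq_sqrt (q1_pos hz).le, phi1,
    div_eq_iff (by simp [hz0] : (2:ℝ)*z ≠ 0), two_mul, exp_add]
  field_simp
  ring

lemma two_alf_gam {z : ℝ} (hz : z < 0) :
    2 * alf z * gam z = -(phi2 z + phi1 z * z * phi2 z) := by
  have ha := (alf_pos hz).ne'
  have hz0 : z ≠ 0 := hz.ne
  rw [gam]
  have h1 : 2 * alf z * (-(exp z * phi2 z) / (2 * alf z)) = -(exp z * phi2 z) := by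
    field_simp
  have hE : exp z = 1 + phi1 z * z := by rw [phi1]; field_simp; ring
  rw [h1, hE]; ring

lemma eta_ineq {z : ℝ} (hz : z < 0) :
    gam z ^ 2 ≤ phi2 z + z * phi2 z ^ 2 / 2 := by
  have hz0 : z ≠ 0 := hz.ne
  have hq1 := q1_pos hz
  have ha := alf_pos hz
  have hga : gam z ^ 2 = (exp z * phi2 z)^2 / (4 * ((exp (2*z) - 1)/(2*z))) := by
    rw [gam, div_pow, neg_sq, mul_pow 2 (alf z), alf, Real.sq_sqrt (q1_pos hz).le]
    norm_num
  have hc : 0 < exp z - z - 1 := by nlinarith [add_one_lt_exp hz0]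
  have hE2 : exp (2*z) = exp z ^ 2 := by rw [two_mul, exp_add]; ring
  have hz4 : (0:ℝ) < z^4 := by positivity
  have hpsi := psi_nonneg hz
  have expand : (phi2 z + z * phi2 z ^ 2 / 2) * (4 * ((exp (2*z) - 1)/(2*z)))
      - (exp z * phi2 z)^2
      = (exp z - z - 1) * (2*z*(exp z)^2 - exp z - z + 1) / z^4 := by
    rw [phi2, hE2]
    field_simp
    ring
  have main : (exp z * phi2 z)^2 ≤ (phi2 z + z * phi2 z ^ 2 / 2) * (4 * ((exp (2*z) - 1)/(2*z))) := by
    nlinarith [div_nonneg (mul_nonneg hc.le hpsi) hz4.le]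
  rw [hga, div_le_iff₀ (by positivity)]
  linarith

lemma eta_sq {z : ℝ} (hz : z < 0) :
    etaf z ^ 2 = phi2 z + z * phi2 z ^ 2 / 2 - gam z ^ 2 := by
  rw [etaf, Real.sq_sqrt]
  have := eta_ineq hz
  linarith


lemma commute_aeval' {A : Type*} [Ring A] [Algebra ℝ A] {M N : A}
    (h : Commute N M) (q : ℝ[X]) : Commute N (aeval M q) := by
  induction q using Polynomial.induction_on with
  | C r => rw [aeval_C]; exact (Algebra.commutes r N).symm
  | add p q hp hq => simpa [_root_.map_add] using hp.add_right hq
  | monomial m r _ =>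
    simp only [_root_.map_mul, map_pow, aeval_C, aeval_X]
    exact (show Commute N _ from (Algebra.commutes r N).symm).mul_right (h.pow_right (m+1))

lemma commute_cfc {n : ℕ} {M N : Matrix (Fin n) (Fin n) ℝ}
    (hM : IsSelfAdjoint M) (h : Commute N M) (f : ℝ → ℝ) : Commute N (cfc f M) := by
  have key : cfc f M = aeval M (Lagrange.interpolate
      (Matrix.finite_real_spectrum (A := M)).toFinset id f) := by
    rw [← cfc_polynomial _ M hM]
    refine cfc_congr fun z hz => ?_
    exact (Lagrange.eval_interpolate_at_node f (Set.injOn_id _)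
      (by simpa using hz)).symm
  rw [key]
  exact commute_aeval' h _

lemma transDot {n : ℕ} (C : Matrix (Fin n) (Fin n) ℝ) (x y : Fin n → ℝ) :
    (C *ᵥ x) ⬝ᵥ y = x ⬝ᵥ (Cᵀ *ᵥ y) := by
  rw [dotProduct_comm, dotProduct_mulVec, ← mulVec_transpose, dotProduct_comm]


lemma descent_lemma {n : ℕ} (β : ℝ) (F : EuclideanSpace ℝ (Fin n) → ℝ)
    (f : EuclideanSpace ℝ (Fin n) → EuclideanSpace ℝ (Fin n))
    (hgrad : ∀ u, HasGradientAt F (f u) u)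
    (hlip : ∀ u v, ‖f u - f v‖ ≤ β * ‖u - v‖)
    (x y : EuclideanSpace ℝ (Fin n)) :
    F y ≤ F x + ⟪f x, y - x⟫ + β / 2 * ‖y - x‖ ^ 2 := by
  set d := y - x with hd
  have hc : ∀ t : ℝ, HasDerivAt (fun t : ℝ => F (x + t • d)) ⟪f (x + t • d), d⟫ t := by
    intro t
    have h1 : HasDerivAt (fun t : ℝ => x + t • d) d t := by
      simpa using ((hasDerivAt_id t).smul_const d).const_add x
    have h2 := ((hgrad (x + t • d)).hasFDerivAt).comp_hasDerivAt t h1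
    simp [InnerProductSpace.toDual_apply_apply] at h2
    exact h2
  set ψ : ℝ → ℝ := fun t => F (x + t • d) - t * ⟪f x, d⟫ - t ^ 2 * (β / 2 * ‖d‖ ^ 2) with hψ
  have hψ' : ∀ t : ℝ, HasDerivAt ψ
      (⟪f (x + t • d), d⟫ - ⟪f x, d⟫ - (2 * t) * (β / 2 * ‖d‖ ^ 2)) t := by
    intro t
    have h3 : HasDerivAt (fun t : ℝ => t * ⟪f x, d⟫) ⟪f x, d⟫ t := by
      simpa using (hasDerivAt_id t).mul_const ⟪f x, d⟫
    have h4 : HasDerivAt (fun t : ℝ => t ^ 2 * (β / 2 * ‖d‖ ^ 2))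
        ((2 * t ^ 1) * (β / 2 * ‖d‖ ^ 2)) t := by
      simpa using (hasDerivAt_pow 2 t).mul_const (β / 2 * ‖d‖ ^ 2)
    have h5 := ((hc t).sub h3).sub h4
    simp at h5
    exact h5
  have hanti : AntitoneOn ψ (Set.Icc 0 1) := by
    apply antitoneOn_of_deriv_nonpos (convex_Icc 0 1)
    · exact Continuous.continuousOn (by
        exact continuous_iff_continuousAt.2 fun t => (hψ' t).continuousAt)
    · intro t ht
      exact (hψ' t).differentiableAt.differentiableWithinAt
    · intro t ht
      rw [(hψ' t).deriv]
      rw [interior_Icc] at ht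
      have hb : ⟪f (x + t • d), d⟫ - ⟪f x, d⟫ ≤ β * t * ‖d‖ ^ 2 := by
        rw [← inner_sub_left]
        calc ⟪f (x + t • d) - f x, d⟫ ≤ ‖f (x + t • d) - f x‖ * ‖d‖ := real_inner_le_norm _ _
        _ ≤ (β * ‖(x + t • d) - x‖) * ‖d‖ :=
            mul_le_mul_of_nonneg_right (hlip _ _) (norm_nonneg d)
        _ = β * (|t| * ‖d‖) * ‖d‖ := by rw [add_sub_cancel_left, norm_smul]; norm_num
        _ = β * t * ‖d‖ ^ 2 := by rw [abs_of_pos ht.1]; ring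
      nlinarith [hb]
    done
  have h01 : ψ 1 ≤ ψ 0 := hanti (by norm_num) (by norm_num) zero_le_one
  have e0 : ψ 0 = F x := by simp [hψ]
  have e1 : ψ 1 = F y - ⟪f x, d⟫ - β / 2 * ‖d‖ ^ 2 := by
    rw [hψ]
    simp only
    rw [show x + (1:ℝ) • d = y by rw [hd, one_smul]; abel]
    ring
  rw [e0, e1] at h01
  linarith

end aux

lemma core_ineq {n : ℕ} (τ : ℝ) (hτ : 0 < τ) (G L : Matrix (Fin n) (Fin n) ℝ)
    (hGsymm : Gᵀ = G) (hLsymm : Lᵀ = L) (hGL : G * L = L * G)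
    (hGneg : ∀ x : Fin n → ℝ, x ≠ 0 → x ⬝ᵥ (G *ᵥ x) < 0)
    (hLpos : ∀ x : Fin n → ℝ, x ≠ 0 → 0 < x ⬝ᵥ (L *ᵥ x))
    (x y : Fin n → ℝ) :
    x ⬝ᵥ ((τ • (cfc phi1 (τ • (G*L)) * G)) *ᵥ x)
    + ((τ • (cfc phi1 (τ • (G*L)) * G)) *ᵥ x) ⬝ᵥ (L *ᵥ ((τ • (cfc phi1 (τ • (G*L)) * G)) *ᵥ x)) / 2
    + (x + L *ᵥ ((τ • (cfc phi1 (τ • (G*L)) * G)) *ᵥ x) - y) ⬝ᵥ (((-τ) • (cfc phi2 (τ • (G*L)) * G)) *ᵥ y)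
    + (((-τ) • (cfc phi2 (τ • (G*L)) * G)) *ᵥ y) ⬝ᵥ (L *ᵥ (((-τ) • (cfc phi2 (τ • (G*L)) * G)) *ᵥ y)) / 2
    ≤ 0 := by
  set M := τ • (G * L) with hMdef
  have hMT : Mᵀ = M := by
    rw [hMdef, transpose_smul, transpose_mul, hGsymm, hLsymm, hGL]
  have hMsa : IsSelfAdjoint M := by
    rw [isSelfAdjoint_iff, star_eq_conjTranspose, conjTranspose_eq_transpose_of_trivial, hMT]
  have hspec : ∀ z ∈ spectrum ℝ M, z < 0 := by
    intro z hz
    rw [spectrum.mem_iff, Algebra.algebraMap_eq_smul_one] at hz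
    have hdet : (z • (1 : Matrix (Fin n) (Fin n) ℝ) - M).det = 0 := by
      by_contra hne
      exact hz ((Matrix.isUnit_iff_isUnit_det _).mpr (isUnit_iff_ne_zero.mpr hne))
    obtain ⟨v, hv0, hv⟩ := (Matrix.exists_mulVec_eq_zero_iff).mpr hdet
    have hMv : M *ᵥ v = z • v := by
      rw [sub_mulVec, smul_mulVec, one_mulVec, sub_eq_zero] at hv
      rw [← hv]
    have hwv : 0 < v ⬝ᵥ (L *ᵥ v) := hLpos v hv0
    have hw0 : L *ᵥ v ≠ 0 := by
      intro h; rw [h] at hwv; simp at hwv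
    have hGw : (L *ᵥ v) ⬝ᵥ (G *ᵥ (L *ᵥ v)) < 0 := hGneg _ hw0
    have key : τ * ((L *ᵥ v) ⬝ᵥ (G *ᵥ (L *ᵥ v))) = z * (v ⬝ᵥ (L *ᵥ v)) := by
      have h1 : (L *ᵥ v) ⬝ᵥ (M *ᵥ v) = z * ((L *ᵥ v) ⬝ᵥ v) := by
        rw [hMv, dotProduct_smul, smul_eq_mul]
      rw [hMdef, smul_mulVec, dotProduct_smul, ← mulVec_mulVec, smul_eq_mul] at h1
      rw [h1, dotProduct_comm]
    nlinarith [hwv, hGw, hτ]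
  have hcont : ∀ h : ℝ → ℝ, ContinuousOn h (spectrum ℝ M) :=
    fun h => Matrix.finite_real_spectrum.continuousOn h
  have hGM : Commute G M := by
    rw [hMdef]
    apply Commute.smul_right
    show G * (G * L) = (G * L) * G
    rw [hGL, ← mul_assoc]
    rw [hGL]
  have hLM : Commute L M := by
    rw [hMdef]
    apply Commute.smul_right
    show L * (G * L) = (G * L) * L
    rw [← mul_assoc, ← hGL]
  have hGS : ∀ h : ℝ → ℝ, G * cfc h M = cfc h M * G :=
    fun h => commute_cfc hMsa hGM h
  have hLS : ∀ h : ℝ → ℝ, L * cfc h M = cfc h M * L :=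
    fun h => commute_cfc hMsa hLM h
  have hST : ∀ h : ℝ → ℝ, (cfc h M)ᵀ = cfc h M := by
    intro h
    have := cfc_predicate h M
    rw [isSelfAdjoint_iff, star_eq_conjTranspose, conjTranspose_eq_transpose_of_trivial] at this
    exact this
  have hmul : ∀ h g : ℝ → ℝ, cfc h M * cfc g M = cfc (fun z => h z * g z) M :=
    fun h g => (cfc_mul h g M (hcont h) (hcont g)).symm
  -- the key product computation
  have hprod : ∀ h g : ℝ → ℝ,
      τ • ((cfc h M * G) * (L * (cfc g M * G)))
        = cfc (fun z => h z * (z * g z)) M * G := by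
    intro h g
    have e1 : (cfc h M * G) * (L * (cfc g M * G)) = cfc h M * ((G * L) * (cfc g M * G)) := by
      noncomm_ring
    rw [e1, ← Matrix.mul_smul, ← Matrix.smul_mul, ← hMdef]
    have e2 : M * (cfc g M * G) = (M * cfc g M) * G := by noncomm_ring
    rw [e2, ← mul_assoc]
    have e3 : M * cfc g M = cfc (fun z => z * g z) M := by
      nth_rewrite 1 [← cfc_id' ℝ M hMsa]
      exact hmul _ _
    rw [e3, hmul]
  -- abbreviations
  set S1 := cfc phi1 M with hS1
  set S2 := cfc phi2 M with hS2
  set SA := cfc alf M with hSA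
  set SC := cfc gam M with hSC
  set SH := cfc etaf M with hSH
  set A := τ • (S1 * G) with hA
  set B := (-τ) • (S2 * G) with hB
  have hAT : Aᵀ = A := by
    rw [hA, transpose_smul, transpose_mul, hGsymm, hST, hGS]
  have hBT : Bᵀ = B := by
    rw [hB, transpose_smul, transpose_mul, hGsymm, hST, hGS]
  have hcfcG : ∀ h g : ℝ → ℝ, cfc h M * (G * cfc g M) = cfc (fun z => h z * g z) M * G := by
    intro h g
    rw [hGS g, ← mul_assoc, hmul]
  have hsmulG : ∀ (c : ℝ) (h : ℝ → ℝ),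
      c • (cfc h M * G) = cfc (fun z => c * h z) M * G := by
    intro c h
    rw [← Matrix.smul_mul, ← cfc_smul c h M (hcont h)]
    congr 1
  -- matrix products
  have hALA : A * (L * A) = τ • (cfc (fun z => phi1 z * (z * phi1 z)) M * G) := by
    rw [hA, Matrix.smul_mul, Matrix.mul_smul, Matrix.mul_smul, hprod]
  have hALB : A * (L * B) = (-τ) • (cfc (fun z => phi1 z * (z * phi2 z)) M * G) := by
    rw [hA, hB, Matrix.smul_mul, Matrix.mul_smul, Matrix.mul_smul, smul_comm τ (-τ), hprod]
  have hBLB : B * (L * B) = τ • (cfc (fun z => phi2 z * (z * phi2 z)) M * G) := by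
    rw [hB, Matrix.smul_mul, Matrix.mul_smul, Matrix.mul_smul, smul_smul, neg_mul_neg,
      ← smul_smul, hprod]
  -- three identities
  have I1 : A + (2⁻¹:ℝ) • (A * (L * A)) = τ • (SA * (G * SA)) := by
    rw [hALA, hA, smul_comm ((2:ℝ)⁻¹) τ, ← smul_add, hSA, hcfcG]
    congr 1
    rw [hS1, hsmulG, ← Matrix.add_mul, ← cfc_add M _ _ (hcont _) (hcont _)]
    congr 1
    apply cfc_congr
    intro z hz
    have h1 := alf_sq (hspec z hz)
    simp only
    linear_combination -h1
  have I2 : B + A * (L * B) = τ • ((2:ℝ) • (SA * (G * SC))) := by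
    rw [hALB, hB, ← smul_add, hSA, hSC, hcfcG,
      show (-τ) = τ * (-1:ℝ) by ring, mul_smul, hsmulG]
    congr 1
    rw [smul_add, hS2, hsmulG, hsmulG, ← Matrix.add_mul, ← cfc_add M _ _ (hcont _) (hcont _)]
    congr 1
    apply cfc_congr
    intro z hz
    have h1 := two_alf_gam (hspec z hz)
    simp only
    linear_combination -h1
  have I3 : (-1:ℝ) • B + (2⁻¹:ℝ) • (B * (L * B)) = τ • (SC * (G * SC) + SH * (G * SH)) := by
    rw [hBLB, hB, show (-1:ℝ) • ((-τ) • (S2 * G)) = τ • (S2 * G) by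
        rw [← mul_smul]; norm_num,
      smul_comm ((2:ℝ)⁻¹) τ, ← smul_add, hSC, hSH, hcfcG, hcfcG,
      ← Matrix.add_mul, ← cfc_add M _ _ (hcont _) (hcont _)]
    congr 1
    rw [hS2, hsmulG, ← Matrix.add_mul, ← cfc_add M _ _ (hcont _) (hcont _)]
    congr 1
    apply cfc_congr
    intro z hz
    have h1 := eta_sq (hspec z hz)
    simp only
    linear_combination -h1
  -- canonical dot-product forms
  have cT2 : (A *ᵥ x) ⬝ᵥ (L *ᵥ (A *ᵥ x)) = x ⬝ᵥ ((A * (L * A)) *ᵥ x) := by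
    rw [transDot, hAT, mulVec_mulVec, mulVec_mulVec, mul_assoc]
  have cT3 : (L *ᵥ (A *ᵥ x)) ⬝ᵥ (B *ᵥ y) = x ⬝ᵥ ((A * (L * B)) *ᵥ y) := by
    rw [transDot, hLsymm, transDot, hAT, mulVec_mulVec, mulVec_mulVec, mul_assoc]
  have cT4 : (B *ᵥ y) ⬝ᵥ (L *ᵥ (B *ᵥ y)) = y ⬝ᵥ ((B * (L * B)) *ᵥ y) := by
    rw [transDot, hBT, mulVec_mulVec, mulVec_mulVec, mul_assoc]
  have cU1 : x ⬝ᵥ ((SA * (G * SA)) *ᵥ x) = (SA *ᵥ x) ⬝ᵥ (G *ᵥ (SA *ᵥ x)) := by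
    rw [transDot, hST, mulVec_mulVec, mulVec_mulVec, mul_assoc]
  have cU2 : x ⬝ᵥ ((SA * (G * SC)) *ᵥ y) = (SA *ᵥ x) ⬝ᵥ (G *ᵥ (SC *ᵥ y)) := by
    rw [transDot, hST, mulVec_mulVec, mulVec_mulVec, mul_assoc]
  have cU3 : (SC *ᵥ y) ⬝ᵥ (G *ᵥ (SA *ᵥ x)) = x ⬝ᵥ ((SA * (G * SC)) *ᵥ y) := by
    rw [dotProduct_comm, transDot G, hGsymm, cU2]
  have cU4 : y ⬝ᵥ ((SC * (G * SC)) *ᵥ y) = (SC *ᵥ y) ⬝ᵥ (G *ᵥ (SC *ᵥ y)) := by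
    rw [transDot, hST, mulVec_mulVec, mulVec_mulVec, mul_assoc]
  have cU5 : y ⬝ᵥ ((SH * (G * SH)) *ᵥ y) = (SH *ᵥ y) ⬝ᵥ (G *ᵥ (SH *ᵥ y)) := by
    rw [transDot, hST, mulVec_mulVec, mulVec_mulVec, mul_assoc]
  -- scalarized identities
  have hX1 : x ⬝ᵥ (A *ᵥ x) + (x ⬝ᵥ ((A * (L * A)) *ᵥ x)) / 2
      = τ * ((SA *ᵥ x) ⬝ᵥ (G *ᵥ (SA *ᵥ x))) := by
    have h := congrArg (fun C => x ⬝ᵥ (C *ᵥ x)) I1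
    simp only [add_mulVec, smul_mulVec, dotProduct_add, dotProduct_smul,
      smul_eq_mul] at h
    rw [cU1] at h
    linarith
  have hX2 : x ⬝ᵥ (B *ᵥ y) + x ⬝ᵥ ((A * (L * B)) *ᵥ y)
      = τ * (2 * ((SA *ᵥ x) ⬝ᵥ (G *ᵥ (SC *ᵥ y)))) := by
    have h := congrArg (fun C => x ⬝ᵥ (C *ᵥ y)) I2
    simp only [add_mulVec, smul_mulVec, dotProduct_add, dotProduct_smul,
      smul_eq_mul] at h
    rw [cU2] at h
    linarith
  have hX3 : -(y ⬝ᵥ (B *ᵥ y)) + (y ⬝ᵥ ((B * (L * B)) *ᵥ y)) / 2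
      = τ * ((SC *ᵥ y) ⬝ᵥ (G *ᵥ (SC *ᵥ y)) + (SH *ᵥ y) ⬝ᵥ (G *ᵥ (SH *ᵥ y))) := by
    have h := congrArg (fun C => y ⬝ᵥ (C *ᵥ y)) I3
    simp only [add_mulVec, smul_mulVec, dotProduct_add, dotProduct_smul,
      smul_eq_mul, neg_one_mul, neg_mulVec, dotProduct_neg] at h
    rw [cU4, cU5] at h
    linarith
  -- nonpositivity
  have hGnp : ∀ w : Fin n → ℝ, w ⬝ᵥ (G *ᵥ w) ≤ 0 := by
    intro w
    by_cases hw : w = 0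
    · simp [hw]
    · exact (hGneg w hw).le
  have cross : ((SA *ᵥ x) + (SC *ᵥ y)) ⬝ᵥ (G *ᵥ ((SA *ᵥ x) + (SC *ᵥ y)))
      = (SA *ᵥ x) ⬝ᵥ (G *ᵥ (SA *ᵥ x)) + 2 * ((SA *ᵥ x) ⬝ᵥ (G *ᵥ (SC *ᵥ y)))
        + (SC *ᵥ y) ⬝ᵥ (G *ᵥ (SC *ᵥ y)) := by
    rw [mulVec_add, dotProduct_add, add_dotProduct, add_dotProduct]
    rw [← cU2, cU3, cU2]
    ring
  have hu := hGnp ((SA *ᵥ x) + (SC *ᵥ y))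
  have hr := hGnp (SH *ᵥ y)
  rw [cross] at hu
  -- final assembly
  rw [cT2, cT4, sub_dotProduct, add_dotProduct, cT3]
  nlinarith [hu, hr, hτ, hX1, hX2, hX3,
    mul_le_mul_of_nonneg_left hu hτ.le, mul_le_mul_of_nonneg_left hr hτ.le]

/-- Unconditional energy decay of the second-order ETDRK scheme
(finite-dimensional version): with stages
`v = u_n + τ·φ₁(τGL)(GLu_n - G g(u_n))` and
`u_{n+1} = u_n + τ·(φ₁-φ₂)(τGL)(GLu_n - G g(u_n)) + τ·φ₂(τGL)(GLu_n - G g(v))`,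
one has `E u_{n+1} ≤ E u_n` for every `τ > 0`.  Here `h(τGL)` denotes the Hermitian
functional calculus `cfc h (τ • (G*L))`. -/
theorem stmt16 (n : ℕ) (hn : 1 ≤ n) (β τ : ℝ) (hβ : 0 < β) (hτ : 0 < τ)
    (G 𝓛 : Matrix (Fin n) (Fin n) ℝ) (hGsymm : Gᵀ = G) (h𝓛symm : 𝓛ᵀ = 𝓛)
    (hcomm : G * 𝓛 = 𝓛 * G)
    (hGneg : ∀ x : Fin n → ℝ, x ≠ 0 → x ⬝ᵥ (G *ᵥ x) < 0)
    (L : Matrix (Fin n) (Fin n) ℝ) (hLdef : L = β • (1 : Matrix (Fin n) (Fin n) ℝ) + 𝓛)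
    (hLpos : ∀ x : Fin n → ℝ, x ≠ 0 → 0 < x ⬝ᵥ (L *ᵥ x))
    (F : EuclideanSpace ℝ (Fin n) → ℝ) (f : EuclideanSpace ℝ (Fin n) → EuclideanSpace ℝ (Fin n))
    (hgrad : ∀ u, HasGradientAt F (f u) u)
    (hlip : ∀ u v, ‖f u - f v‖ ≤ β * ‖u - v‖)
    (g : EuclideanSpace ℝ (Fin n) → EuclideanSpace ℝ (Fin n))
    (hg : ∀ u, g u = β • u - f u)
    (E : EuclideanSpace ℝ (Fin n) → ℝ)
    (hE : ∀ u, E u = (1 / 2) * ⟪u, mulVecE 𝓛 u⟫ + F u)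
    (un v unp1 : EuclideanSpace ℝ (Fin n))
    (hv : v = un + τ • mulVecE (cfc phi1 (τ • (G * L)))
        (mulVecE G (mulVecE L un) - mulVecE G (g un)))
    (hstep : unp1 = un
        + τ • mulVecE (cfc (fun z => phi1 z - phi2 z) (τ • (G * L)))
            (mulVecE G (mulVecE L un) - mulVecE G (g un))
        + τ • mulVecE (cfc phi2 (τ • (G * L)))
            (mulVecE G (mulVecE L un) - mulVecE G (g v))) :
    E unp1 ≤ E un := by
  have hLsymm : Lᵀ = L := by
    rw [hLdef, transpose_add, transpose_smul, transpose_one, h𝓛symm]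
  have hGL : G * L = L * G := by
    rw [hLdef, mul_add, add_mul, hcomm, Matrix.mul_smul, Matrix.smul_mul, mul_one, one_mul]
  set M := τ • (G * L) with hM
  have hcont : ∀ h : ℝ → ℝ, ContinuousOn h (spectrum ℝ M) :=
    fun h => Matrix.finite_real_spectrum.continuousOn h
  -- bridges between EuclideanSpace and Pi operations
  have hip : ∀ a b : EuclideanSpace ℝ (Fin n), ⟪a, b⟫ = a ⬝ᵥ b := by
    intro a b
    simp [PiLp.inner_apply, RCLike.inner_apply, dotProduct]
    exact Finset.sum_congr rfl fun _ _ => mul_comm _ _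
  have cA : ∀ a b : EuclideanSpace ℝ (Fin n),
      (a + b : EuclideanSpace ℝ (Fin n)) = ((a : Fin n → ℝ) + (b : Fin n → ℝ) : Fin n → ℝ) :=
    fun _ _ => rfl
  have cS : ∀ a b : EuclideanSpace ℝ (Fin n),
      (a - b : EuclideanSpace ℝ (Fin n)) = ((a : Fin n → ℝ) - (b : Fin n → ℝ) : Fin n → ℝ) :=
    fun _ _ => rfl
  have cM : ∀ (r : ℝ) (a : EuclideanSpace ℝ (Fin n)),
      (r • a : EuclideanSpace ℝ (Fin n)) = (r • (a : Fin n → ℝ) : Fin n → ℝ) :=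
    fun _ _ => rfl
  -- L action
  have hLmv : ∀ u : EuclideanSpace ℝ (Fin n), mulVecE L u = β • u + mulVecE 𝓛 u := by
    intro u
    simp only [mulVecE, cA, cM]
    rw [hLdef, Matrix.add_mulVec, Matrix.smul_mulVec, Matrix.one_mulVec]
    rfl
  -- one-step energy bound
  have estep : ∀ a w : EuclideanSpace ℝ (Fin n),
      E (a + w) ≤ E a + ⟪mulVecE L a - g a, w⟫ + (1/2) * ⟪w, mulVecE L w⟫ := by
    intro a w
    have hd := descent_lemma β F f hgrad hlip a (a + w)
    rw [add_sub_cancel_left] at hd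
    have hadd : mulVecE 𝓛 (a + w) = mulVecE 𝓛 a + mulVecE 𝓛 w := by
      simp only [mulVecE, cA]
      rw [Matrix.mulVec_add]
      rfl
    have hquad : ⟪a + w, mulVecE 𝓛 (a + w)⟫
        = ⟪a, mulVecE 𝓛 a⟫ + 2 * ⟪mulVecE 𝓛 a, w⟫ + ⟪w, mulVecE 𝓛 w⟫ := by
      rw [hadd, hip, hip, hip, hip]
      simp only [mulVecE, cA]
      rw [dotProduct_add, add_dotProduct, add_dotProduct]
      have e1 : (a : Fin n → ℝ) ⬝ᵥ (𝓛 *ᵥ w) = (𝓛 *ᵥ a) ⬝ᵥ w := by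
        rw [transDot, h𝓛symm]
      have e2 : (w : Fin n → ℝ) ⬝ᵥ (𝓛 *ᵥ a) = (𝓛 *ᵥ a) ⬝ᵥ w := dotProduct_comm _ _
      rw [e1, e2]
      ring
    have hfid : mulVecE L a - g a = mulVecE 𝓛 a + f a := by
      rw [hLmv, hg]
      abel
    have hLw : ⟪w, mulVecE L w⟫ = β * ⟪w, w⟫ + ⟪w, mulVecE 𝓛 w⟫ := by
      rw [hLmv, inner_add_right, real_inner_smul_right]
    have hnw : ⟪w, w⟫ = ‖w‖ ^ 2 := real_inner_self_eq_norm_sq w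
    have hfa : ⟪mulVecE L a - g a, w⟫ = ⟪mulVecE 𝓛 a, w⟫ + ⟪f a, w⟫ := by
      rw [hfid, inner_add_left]
    rw [hE (a + w), hE a, hquad, hfa, hLw, hnw]
    linarith [hd]
  -- vector abbreviations
  set p : EuclideanSpace ℝ (Fin n) := mulVecE L un - g un with hp
  have hGp : mulVecE G (mulVecE L un) - mulVecE G (g un) = mulVecE G p := by
    rw [hp]
    simp only [mulVecE, cS]
    rw [Matrix.mulVec_sub]
    rfl
  set w : EuclideanSpace ℝ (Fin n) := τ • mulVecE (cfc phi1 M) (mulVecE G p) with hw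
  have hv' : v = un + w := by rw [hv, hGp]
  set δ : EuclideanSpace ℝ (Fin n) := g v - g un with hδ
  set e : EuclideanSpace ℝ (Fin n) := (-τ) • mulVecE (cfc phi2 M) (mulVecE G δ) with he
  have hGsub : ∀ a b : EuclideanSpace ℝ (Fin n),
      mulVecE G a - mulVecE G b = mulVecE G (a - b) := by
    intro a b
    simp only [mulVecE, cS]
    rw [Matrix.mulVec_sub]
    rfl
  have hpδ : mulVecE G (mulVecE L un) - mulVecE G (g v) = mulVecE G p - mulVecE G δ := by
    have hsub2 : (p - δ : EuclideanSpace ℝ (Fin n)) = mulVecE L un - g v := by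
      rw [hp, hδ]
      abel
    rw [hGsub, hGsub, hsub2]
  have hstep' : unp1 = v + e := by
    rw [hstep, hGp, hpδ, hv']
    have hsub : cfc (fun z => phi1 z - phi2 z) M = cfc phi1 M - cfc phi2 M :=
      cfc_sub phi1 phi2 M (hcont _) (hcont _)
    rw [hsub]
    have h1 : mulVecE (cfc phi1 M - cfc phi2 M) (mulVecE G p)
        = mulVecE (cfc phi1 M) (mulVecE G p) - mulVecE (cfc phi2 M) (mulVecE G p) := by
      simp only [mulVecE, cS]
      rw [Matrix.sub_mulVec]
      rfl
    have h2 : mulVecE (cfc phi2 M) (mulVecE G p - mulVecE G δ)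
        = mulVecE (cfc phi2 M) (mulVecE G p) - mulVecE (cfc phi2 M) (mulVecE G δ) := by
      simp only [mulVecE, cS]
      rw [Matrix.mulVec_sub]
      rfl
    rw [h1, h2, smul_sub, smul_sub, he, neg_smul]
    abel
  -- matrix forms of w and e
  have hwA : (w : Fin n → ℝ) = (τ • (cfc phi1 M * G)) *ᵥ p := by
    rw [hw]
    simp only [mulVecE, cM]
    rw [Matrix.smul_mulVec, Matrix.mulVec_mulVec]
  have heB : (e : Fin n → ℝ) = ((-τ) • (cfc phi2 M * G)) *ᵥ δ := by
    rw [he]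
    simp only [mulVecE, cM]
    rw [Matrix.smul_mulVec, Matrix.mulVec_mulVec]
  -- two descent steps
  have h1 := estep un w
  rw [← hv', ← hp] at h1
  have h2 := estep v e
  rw [← hstep'] at h2
  have h3 : mulVecE L v - g v = p + mulVecE L w - δ := by
    have hLv : mulVecE L v = mulVecE L un + mulVecE L w := by
      rw [hv']
      simp only [mulVecE, cA]
      rw [Matrix.mulVec_add]
      rfl
    rw [hLv, hp, hδ]
    abel
  rw [h3] at h2
  -- core inequality
  have hcore := core_ineq τ hτ G L hGsymm hLsymm hGL hGneg hLpos p δ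
  rw [← hM, ← hwA, ← heB] at hcore
  -- translate the inner products
  simp only [hip, mulVecE, cA, cS, cM] at h1 h2
  linarith [h1, h2, hcore]
end
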